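/- Let (w̃, m̃, H̃) solve the cell problem: for each x ∈ 𝕋^d and Λ ∈ ℝ^d, (1/2)|Λ+∇_y w̃(x,Λ,y)|² + V(x,y) = ln m̃(x,Λ,y) + H̃(x,Λ) and −div_y(m̃(Λ+∇_y w̃)) = 0 in 𝒴^d with ∫_{𝒴^d} m̃ dy = 1, m̃ > 0. If d > 1, assume in addition that V is separable in y, i.e. V(x,y) = Σ_{i=1}^d V_i(x, y_i) for smooth functions V_i : 𝕋^d × ℝ → ℝ which are 1-periodic in y_i. Then there exists a constant C > 0 such that m̃(x,Λ,y) ≥ C for all x ∈ 𝕋^d, y ∈ 𝒴^d, and Λ ∈ ℝ^d. -/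

import Mathlib

open MeasureTheory Filter Topology Function

noncomputable section

/-- The unit cell `𝒴^d = [0,1)^d`. -/
def cube (d : ℕ) : Set (Fin d → ℝ) := Set.univ.pi fun _ => Set.Ico (0 : ℝ) 1

/-- `ℤ^d`-periodicity of a function on `ℝ^d`; functions on the torus `𝕋^d`
(and `𝒴^d`-periodic functions) are identified with such functions. -/
def ZPer {d : ℕ} (f : (Fin d → ℝ) → ℝ) : Prop :=
  ∀ (x : Fin d → ℝ) (k : Fin d → ℤ), f (fun i => x i + (k i : ℝ)) = f x

/-- The `i`-th partial derivative. -/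
def pder {d : ℕ} (i : Fin d) (f : (Fin d → ℝ) → ℝ) (x : Fin d → ℝ) : ℝ :=
  fderiv ℝ f x (Pi.single i 1)

/-- `V : 𝕋^d × ℝ^d → ℝ` smooth, `𝒴^d`-periodic in the second variable
(and periodic in the first, i.e. defined on the torus). -/
def SmoothV {d : ℕ} (V : (Fin d → ℝ) → (Fin d → ℝ) → ℝ) : Prop :=
  ContDiff ℝ (⊤ : ℕ∞) (uncurry V) ∧ (∀ y, ZPer fun x => V x y) ∧ (∀ x, ZPer (V x))

/-- `sup_{(x,y) ∈ 𝕋^d × 𝒴^d} V (x,y)` (by periodicity, the sup over all of `ℝ^d × ℝ^d`). -/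
def supV {d : ℕ} (V : (Fin d → ℝ) → (Fin d → ℝ) → ℝ) : ℝ :=
  ⨆ q : (Fin d → ℝ) × (Fin d → ℝ), V q.1 q.2

/-- `inf_{(x,y) ∈ 𝕋^d × 𝒴^d} V (x,y)`. -/
def infV {d : ℕ} (V : (Fin d → ℝ) → (Fin d → ℝ) → ℝ) : ℝ :=
  ⨅ q : (Fin d → ℝ) × (Fin d → ℝ), V q.1 q.2

/-- `(w, m, H)` is a classical solution of the cell problem at `(x, Λ)`:
`|Λ+∇_y w|²/2 + V(x,y) = ln m + H`, `-div_y(m (Λ+∇_y w)) = 0` in `𝒴^d`, `∫_{𝒴^d} m = 1`. -/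
def CellSolAt {d : ℕ} (V : (Fin d → ℝ) → (Fin d → ℝ) → ℝ)
    (x Λ : Fin d → ℝ) (w m : (Fin d → ℝ) → ℝ) (H : ℝ) : Prop :=
  ContDiff ℝ 2 w ∧ ZPer w ∧ ContDiff ℝ 1 m ∧ ZPer m ∧ (∀ y, 0 < m y) ∧
  (∀ y, (∑ i, (Λ i + pder i w y) ^ 2) / 2 + V x y = Real.log (m y) + H) ∧
  (∀ y, (∑ i, pder i (fun z => m z * (Λ i + pder i w z)) y) = 0) ∧
  (∫ y in cube d, m y) = 1

/-- `V` is separable in `y`: `V(x,y) = Σ_i V_i(x, y_i)` with each `V_i` smooth, periodic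
in the torus variable `x` and `1`-periodic in `y_i`. -/
def SeparableVPer {d : ℕ} (V : (Fin d → ℝ) → (Fin d → ℝ) → ℝ) : Prop :=
  ∃ Vi : Fin d → ((Fin d → ℝ) → ℝ → ℝ),
    (∀ i, ContDiff ℝ (⊤ : ℕ∞) (uncurry (Vi i))) ∧
    (∀ i t, ZPer fun x => Vi i x t) ∧
    (∀ i x, Function.Periodic (Vi i x) 1) ∧
    ∀ x y, V x y = ∑ i, Vi i x (y i)



/-- `φ_c(u) = u - (c²/2) e^{-2u}`. -/
def phiG (c u : ℝ) : ℝ := u - c^2/2 * Real.exp (-(2*u))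

lemma phiG_strictMono (c : ℝ) : StrictMono (phiG c) := by
  intro a b hab
  have h1 : c^2/2 * Real.exp (-(2*b)) ≤ c^2/2 * Real.exp (-(2*a)) := by
    apply mul_le_mul_of_nonneg_left (Real.exp_le_exp.2 (by linarith)) (by positivity)
  simp only [phiG]; linarith

lemma phiG_hasStrictDerivAt (c u : ℝ) :
    HasStrictDerivAt (phiG c) (1 + c^2 * Real.exp (-(2*u))) u := by
  have h0 : HasStrictDerivAt (fun u : ℝ => -(2*u)) (-2) u := by
    simpa using ((hasStrictDerivAt_id u).const_mul (-2 : ℝ))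
  have h1 : HasStrictDerivAt (fun u : ℝ => Real.exp (-(2*u)))
      (Real.exp (-(2*u)) * (-2)) u := (Real.hasStrictDerivAt_exp _).comp u h0
  have h2 := (hasStrictDerivAt_id u).sub (h1.const_mul (c^2/2))
  exact h2.congr_deriv (by ring)

lemma phiG_continuous : Continuous (fun p : ℝ × ℝ => phiG p.1 p.2) := by
  unfold phiG; fun_prop

lemma phiG_surjective (c : ℝ) : Function.Surjective (phiG c) := by
  have hc : Continuous (phiG c) := by unfold phiG; fun_prop
  apply hc.surjective
  · apply tendsto_atTop_mono' _ _ (tendsto_atTop_add_const_right atTop (-(c^2/2)) tendsto_id)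
    filter_upwards [eventually_ge_atTop (0:ℝ)] with u hu
    have : Real.exp (-(2*u)) ≤ 1 := Real.exp_le_one_iff.2 (by linarith)
    have h2 : c^2/2 * Real.exp (-(2*u)) ≤ c^2/2 * 1 :=
      mul_le_mul_of_nonneg_left this (by positivity)
    simp only [phiG]; simp only [id_eq]; linarith
  · apply tendsto_atBot_mono _ tendsto_id
    intro u
    have : 0 ≤ c^2/2 * Real.exp (-(2*u)) := by positivity
    simp only [phiG, id_eq]; linarith

/-- Inverse of `φ_c`. -/
def psiG (c s : ℝ) : ℝ := Function.invFun (phiG c) s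

lemma phiG_psiG (c s : ℝ) : phiG c (psiG c s) = s :=
  Function.invFun_eq (phiG_surjective c s)

lemma psiG_phiG (c u : ℝ) : psiG c (phiG c u) = u :=
  Function.leftInverse_invFun (phiG_strictMono c).injective u

/-- The defining relation: `ψ = s + (c²/2) e^{-2ψ}`. -/
lemma psiG_eq (c s : ℝ) : psiG c s = s + c^2/2 * Real.exp (-(2 * psiG c s)) := by
  have := phiG_psiG c s
  simp only [phiG] at this; linarith

lemma psiG_neg (c s : ℝ) : psiG (-c) s = psiG c s := by
  have : phiG (-c) = phiG c := by funext u; simp [phiG]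
  rw [psiG, this]; rfl

lemma continuous_psiG : Continuous (fun p : ℝ × ℝ => psiG p.1 p.2) := by
  rw [continuous_iff_continuousAt]
  intro p
  rw [ContinuousAt, Metric.tendsto_nhds]
  intro ε hε
  set u₀ := psiG p.1 p.2 with hu₀
  have h1 : phiG p.1 (u₀ - ε/2) < p.2 := by
    have := phiG_strictMono p.1 (show u₀ - ε/2 < u₀ by linarith)
    rwa [phiG_psiG] at this
  have h2 : p.2 < phiG p.1 (u₀ + ε/2) := by
    have := phiG_strictMono p.1 (show u₀ < u₀ + ε/2 by linarith)
    rwa [phiG_psiG] at this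
  have hev : ∀ᶠ q : ℝ × ℝ in 𝓝 p, phiG q.1 (u₀ - ε/2) < q.2 ∧ q.2 < phiG q.1 (u₀ + ε/2) := by
    have hopen : IsOpen {q : ℝ × ℝ | phiG q.1 (u₀ - ε/2) < q.2 ∧ q.2 < phiG q.1 (u₀ + ε/2)} := by
      apply IsOpen.inter
      · exact isOpen_lt (by unfold phiG; fun_prop) continuous_snd
      · exact isOpen_lt continuous_snd (by unfold phiG; fun_prop)
    exact hopen.mem_nhds ⟨h1, h2⟩
  filter_upwards [hev] with q hq
  have l1 : u₀ - ε/2 < psiG q.1 q.2 := by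
    have := hq.1; rw [← phiG_psiG q.1 q.2] at this
    exact (phiG_strictMono q.1).lt_iff_lt.mp this
  have l2 : psiG q.1 q.2 < u₀ + ε/2 := by
    have := hq.2; rw [← phiG_psiG q.1 q.2] at this
    exact (phiG_strictMono q.1).lt_iff_lt.mp this
  rw [Real.dist_eq, abs_lt]; constructor <;> linarith

lemma continuous_psiG_right (c : ℝ) : Continuous (psiG c) := by
  have : (psiG c) = (fun p : ℝ × ℝ => psiG p.1 p.2) ∘ (fun s => (c, s)) := rfl
  rw [this]; exact continuous_psiG.comp (by fun_prop)

lemma psiG_hasDerivAt (c s : ℝ) :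
    HasDerivAt (psiG c) (1 + c^2 * Real.exp (-(2 * psiG c s)))⁻¹ s := by
  apply HasDerivAt.of_local_left_inverse ((continuous_psiG_right c).continuousAt)
    ((phiG_hasStrictDerivAt c (psiG c s)).hasDerivAt)
  · positivity
  · exact Eventually.of_forall fun y => phiG_psiG c y

section OneD

/-- `M_c(t) = exp(ψ_c(v t))`. -/
def Mfun (c : ℝ) (v : ℝ → ℝ) (t : ℝ) : ℝ := Real.exp (psiG c (v t))

variable {v : ℝ → ℝ} {B : ℝ}

lemma Mfun_pos (c : ℝ) (t : ℝ) : 0 < Mfun c v t := Real.exp_pos _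

lemma Mfun_ratio (c : ℝ) (hB : ∀ t, |v t| ≤ B) (s t : ℝ) :
    Mfun c v s ≤ Real.exp (2*B) * Mfun c v t := by
  have hBs := hB s; have hBt := hB t
  have h2B : 0 ≤ B := le_trans (abs_nonneg _) (hB 0)
  have key : psiG c (v s) ≤ psiG c (v t) + 2*B := by
    rcases le_or_gt (psiG c (v s)) (psiG c (v t)) with h | h
    · linarith
    · have es := psiG_eq c (v s)
      have et := psiG_eq c (v t)
      have hexp : Real.exp (-(2 * psiG c (v s))) ≤ Real.exp (-(2 * psiG c (v t))) :=
        Real.exp_le_exp.2 (by linarith)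
      have hc : c^2/2 * Real.exp (-(2 * psiG c (v s))) ≤
          c^2/2 * Real.exp (-(2 * psiG c (v t))) :=
        mul_le_mul_of_nonneg_left hexp (by positivity)
      have h1 : -B ≤ v t := (abs_le.1 hBt).1
      have h2 : v s ≤ B := (abs_le.1 hBs).2
      linarith
  calc Mfun c v s = Real.exp (psiG c (v s)) := rfl
    _ ≤ Real.exp (psiG c (v t) + 2*B) := Real.exp_le_exp.2 key
    _ = Real.exp (2*B) * Mfun c v t := by rw [Real.exp_add, Mfun]; ring

lemma Mfun_inv_lower (hB : ∀ t, |v t| ≤ B) {c T : ℝ} (hc : 0 < c) (hT : 0 < T) (t : ℝ) :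
    min (T/c) (Real.exp (-(B + T^2/2))) ≤ (Mfun c v t)⁻¹ := by
  set u := psiG c (v t) with hu
  have hMinv : (Mfun c v t)⁻¹ = Real.exp (-u) := by rw [Mfun, ← Real.exp_neg]
  rcases le_or_gt u (B + T^2/2) with h | h
  · rw [hMinv]
    exact le_trans (min_le_right _ _) (Real.exp_le_exp.2 (by linarith))
  · have heq := psiG_eq c (v t)
    have hvB : v t ≤ B := (abs_le.1 (hB t)).2
    have hbig : T^2/2 < c^2/2 * Real.exp (-(2*u)) := by rw [← hu] at heq; linarith
    have hTc : T/c < Real.exp (-u) := by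
      by_contra hcon
      push_neg at hcon
      have hsq : Real.exp (-u) ^ 2 ≤ (T/c)^2 :=
        pow_le_pow_left₀ (Real.exp_nonneg _) hcon 2
      have hexp2 : Real.exp (-(2*u)) = Real.exp (-u) ^ 2 := by
        rw [pow_two, ← Real.exp_add]; ring_nf
      rw [hexp2] at hbig
      have : c^2/2 * Real.exp (-u)^2 ≤ c^2/2 * (T/c)^2 :=
        mul_le_mul_of_nonneg_left hsq (by positivity)
      have hTc2 : c^2/2 * (T/c)^2 = T^2/2 := by field_simp
      rw [hTc2] at this; linarith
    rw [hMinv]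
    exact le_trans (min_le_left _ _) hTc.le

lemma Mfun_continuous (hv : Continuous v) (c : ℝ) : Continuous (Mfun c v) :=
  Real.continuous_exp.comp ((continuous_psiG_right c).comp hv)

/-- The 1-dimensional cell problem solver. -/
lemma oneDSolve (v : ℝ → ℝ) (hv : ContDiff ℝ 1 v) (hper : Function.Periodic v 1)
    (B : ℝ) (hB : ∀ t, |v t| ≤ B) (lam : ℝ) :
    ∃ (w m : ℝ → ℝ) (h cc : ℝ),
      ContDiff ℝ 2 w ∧ Function.Periodic w 1 ∧ ContDiff ℝ 1 m ∧ Function.Periodic m 1 ∧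
      (∀ t, 0 < m t) ∧ (∀ t, Real.exp (-(2*B)) ≤ m t) ∧
      (∀ t, m t * (lam + deriv w t) = cc) ∧
      (∀ t, (lam + deriv w t)^2/2 + v t = Real.log (m t) + h) ∧
      (∫ t in (0:ℝ)..1, m t) = 1 := by
  have hvc : Continuous v := hv.continuous
  have h2B : 0 ≤ B := le_trans (abs_nonneg _) (hB 0)
  -- the flux equation G c = lam
  set T : ℝ := |lam| + 1 with hT
  have hTpos : 0 < T := by positivity
  set c₀ : ℝ := T * Real.exp (B + T^2/2) with hc₀
  have hc₀pos : 0 < c₀ := by positivity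
  set G : ℝ → ℝ := fun c => c * ∫ t in (0:ℝ)..1, (Mfun c v t)⁻¹ with hG
  have hGcont : Continuous G := by
    apply continuous_id'.mul
    apply intervalIntegral.continuous_parametric_intervalIntegral_of_continuous'
    have : Continuous fun q : ℝ × ℝ => Real.exp (-(psiG q.1 (v q.2))) := by
      apply Real.continuous_exp.comp
      apply Continuous.neg
      exact continuous_psiG.comp (continuous_fst.prodMk (hvc.comp continuous_snd))
    have heq : (Function.uncurry fun c t => (Mfun c v t)⁻¹) =
        fun q : ℝ × ℝ => Real.exp (-(psiG q.1 (v q.2))) := by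
      funext q; simp [Function.uncurry, Mfun, ← Real.exp_neg]
    rw [heq]; exact this
  have hGodd : ∀ c, G (-c) = - G c := by
    intro c
    have : Mfun (-c) v = Mfun c v := by funext t; rw [Mfun, Mfun, psiG_neg]
    simp only [hG, this, neg_mul]
  have hGc₀ : T ≤ G c₀ := by
    have hlow : ∀ t ∈ Set.Icc (0:ℝ) 1, Real.exp (-(B + T^2/2)) ≤ (Mfun c₀ v t)⁻¹ := by
      intro t _
      have := Mfun_inv_lower hB hc₀pos hTpos t
      have hmin : min (T/c₀) (Real.exp (-(B + T^2/2))) = Real.exp (-(B + T^2/2)) := by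
        have : T/c₀ = Real.exp (-(B + T^2/2)) := by
          rw [hc₀, Real.exp_neg]; field_simp
        rw [this, min_self]
      rwa [hmin] at this
    have hint : Real.exp (-(B + T^2/2)) ≤ ∫ t in (0:ℝ)..1, (Mfun c₀ v t)⁻¹ := by
      have h1 : (∫ t in (0:ℝ)..1, Real.exp (-(B + T^2/2))) = Real.exp (-(B + T^2/2)) := by
        simp
      rw [← h1]
      apply intervalIntegral.integral_mono_on zero_le_one _ _ hlow
      · exact intervalIntegrable_const
      · exact ((Mfun_continuous hvc c₀).inv₀ (fun t => (Mfun_pos c₀ t).ne')).intervalIntegrable _ _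
    calc T = c₀ * Real.exp (-(B + T^2/2)) := by
          rw [hc₀, Real.exp_neg]; field_simp
      _ ≤ G c₀ := by
          rw [hG]
          exact mul_le_mul_of_nonneg_left hint hc₀pos.le
  have hIVT : ∃ c ∈ Set.Icc (-c₀) c₀, G c = lam := by
    have hmem : lam ∈ Set.Icc (G (-c₀)) (G c₀) := by
      rw [hGodd]
      constructor
      · have : lam ≥ -T := by rw [hT]; cases abs_cases lam <;> linarith
        linarith
      · have : lam ≤ T := by rw [hT]; cases abs_cases lam <;> linarith
        linarith
    have := intermediate_value_Icc (by linarith : -c₀ ≤ c₀) hGcont.continuousOn hmem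
    obtain ⟨c, hc, hGc⟩ := this
    exact ⟨c, hc, hGc⟩
  obtain ⟨c, _, hGc⟩ := hIVT
  -- the normalization constant
  set M : ℝ → ℝ := Mfun c v with hM
  have hMc : Continuous M := Mfun_continuous hvc c
  have hMpos : ∀ t, 0 < M t := Mfun_pos c
  set I : ℝ := ∫ t in (0:ℝ)..1, M t with hI
  have hIpos : 0 < I :=
    intervalIntegral.intervalIntegral_pos_of_pos (hMc.intervalIntegrable _ _) hMpos zero_lt_one
  -- the solution
  set E : ℝ → ℝ := fun t => psiG c (v t) with hE
  have hEcont : Continuous E := (continuous_psiG_right c).comp hvc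
  have hEd : ContDiff ℝ 1 E := by
    rw [contDiff_one_iff_deriv]
    have hder : ∀ t, HasDerivAt E ((1 + c^2 * Real.exp (-(2 * E t)))⁻¹ * deriv v t) t := by
      intro t
      exact (psiG_hasDerivAt c (v t)).comp t (hv.differentiable one_ne_zero t).hasDerivAt
    constructor
    · exact fun t => (hder t).differentiableAt
    · have : deriv E = fun t => (1 + c^2 * Real.exp (-(2 * E t)))⁻¹ * deriv v t := by
        funext t; exact (hder t).deriv
      rw [this]
      have hcd : Continuous (deriv v) := (contDiff_one_iff_deriv.1 hv).2
      have hne : ∀ t, (1 + c^2 * Real.exp (-(2 * E t))) ≠ 0 := by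
        intro t; positivity
      exact ((continuous_const.add (continuous_const.mul
        (Real.continuous_exp.comp ((continuous_const.mul hEcont).neg)))).inv₀ hne).mul hcd
  have hMeq : M = fun t => Real.exp (E t) := rfl
  have hMd : ContDiff ℝ 1 M := by rw [hMeq]; exact Real.contDiff_exp.comp hEd
  set m : ℝ → ℝ := fun t => M t / I with hm
  set u : ℝ → ℝ := fun t => c * Real.exp (-(E t)) - lam with hu
  have hucont : Continuous u := by
    apply Continuous.sub _ continuous_const
    exact continuous_const.mul (Real.continuous_exp.comp hEcont.neg)
  have hud : ContDiff ℝ 1 u :=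
    ((contDiff_const.mul (Real.contDiff_exp.comp hEd.neg)).sub contDiff_const)
  have huM : ∀ t, u t = c * (M t)⁻¹ - lam := by
    intro t; rw [hu, hMeq]; simp [Real.exp_neg]
  set w : ℝ → ℝ := fun y => ∫ t in (0:ℝ)..y, u t with hw
  have hwder : ∀ y, HasDerivAt w (u y) y := fun y =>
    (hucont.integral_hasStrictDerivAt 0 y).hasDerivAt
  have hwderiv : deriv w = u := funext fun y => (hwder y).deriv
  have hperE : Function.Periodic E 1 := fun t => by rw [hE]; simp [hper t]
  have hperM : Function.Periodic M 1 := fun t => by rw [hMeq]; simp [hperE t]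
  have hperu : Function.Periodic u 1 := fun t => by rw [hu]; simp [hperE t]
  have huint0 : (∫ t in (0:ℝ)..1, u t) = 0 := by
    have hsplit : (∫ t in (0:ℝ)..1, u t) =
        (∫ t in (0:ℝ)..1, c * (M t)⁻¹) - ∫ t in (0:ℝ)..1, lam := by
      rw [← intervalIntegral.integral_sub]
      · apply intervalIntegral.integral_congr; intro t _; rw [huM t]
      · exact (continuous_const.mul (hMc.inv₀ fun t => (hMpos t).ne')).intervalIntegrable _ _
      · exact intervalIntegrable_const
    rw [hsplit, intervalIntegral.integral_const_mul]
    have : c * ∫ t in (0:ℝ)..1, (M t)⁻¹ = G c := rfl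
    rw [this, hGc]; simp
  refine ⟨w, m, Real.log I, c / I, ?_, ?_, ?_, ?_, ?_, ?_, ?_, ?_, ?_⟩
  · -- ContDiff ℝ 2 w
    rw [show (2 : WithTop ℕ∞) = (1 : WithTop ℕ∞) + 1 by norm_num, contDiff_succ_iff_deriv]
    refine ⟨fun y => (hwder y).differentiableAt, ?_, ?_⟩
    · intro hcon; simp at hcon
    · rw [hwderiv]; exact hud
  · -- Periodic w 1
    intro y
    have hsplit : (∫ t in (0:ℝ)..(y+1), u t) =
        (∫ t in (0:ℝ)..y, u t) + ∫ t in y..(y+1), u t :=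
      (intervalIntegral.integral_add_adjacent_intervals (hucont.intervalIntegrable _ _)
        (hucont.intervalIntegrable _ _)).symm
    have hshift : (∫ t in y..(y+1), u t) = ∫ t in (0:ℝ)..(0+1:ℝ), u t :=
      hperu.intervalIntegral_add_eq y 0
    simp only [hw]
    rw [hsplit, hshift]; rw [zero_add, huint0, add_zero]
  · -- ContDiff ℝ 1 m
    exact hMd.div_const I
  · -- Periodic m 1
    intro t; simp only [hm]; rw [hperM t]
  · -- positivity
    intro t; exact div_pos (hMpos t) hIpos
  · -- lower bound
    intro t
    have hIle : I ≤ Real.exp (2*B) * M t := by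
      have hmono : ∀ s ∈ Set.Icc (0:ℝ) 1, M s ≤ Real.exp (2*B) * M t :=
        fun s _ => Mfun_ratio c hB s t
      have h1 : (∫ s in (0:ℝ)..1, Real.exp (2*B) * M t) = Real.exp (2*B) * M t := by simp
      rw [hI, ← h1]
      exact intervalIntegral.integral_mono_on zero_le_one (hMc.intervalIntegrable _ _)
        intervalIntegrable_const hmono
    rw [hm]
    rw [ge_iff_le.symm, ge_iff_le, le_div_iff₀ hIpos]
    calc Real.exp (-(2*B)) * I ≤ Real.exp (-(2*B)) * (Real.exp (2*B) * M t) :=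
          mul_le_mul_of_nonneg_left hIle (Real.exp_nonneg _)
      _ = M t := by rw [← mul_assoc, ← Real.exp_add]; simp
  · -- flux
    intro t
    rw [hwderiv, huM t, hm]
    have hMne : M t ≠ 0 := (hMpos t).ne'
    field_simp; ring
  · -- HJ
    intro t
    rw [hwderiv, huM t, hm]
    have hMne : M t ≠ 0 := (hMpos t).ne'
    have hlog : Real.log (M t / I) = E t - Real.log I := by
      rw [Real.log_div hMne hIpos.ne', hMeq, Real.log_exp]
    rw [hlog]
    have hMinv : (M t)⁻¹ = Real.exp (-(E t)) := by rw [hMeq]; simp [Real.exp_neg]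
    have hsq : (lam + (c * (M t)⁻¹ - lam))^2 = c^2 * Real.exp (-(2 * E t)) := by
      rw [hMinv]
      have : Real.exp (-(E t))^2 = Real.exp (-(2 * E t)) := by
        rw [pow_two, ← Real.exp_add]; ring_nf
      rw [show lam + (c * Real.exp (-(E t)) - lam) = c * Real.exp (-(E t)) by ring,
        mul_pow, this]
    rw [hsq]
    have hEt : E t = v t + c^2/2 * Real.exp (-(2 * E t)) := psiG_eq c (v t)
    linarith
  · -- integral
    rw [hm]
    rw [intervalIntegral.integral_div, ← hI, div_self hIpos.ne']

end OneD

section CubeLemmas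

variable {d : ℕ}

lemma measurableSet_cube : MeasurableSet (cube d) :=
  MeasurableSet.univ_pi fun _ => measurableSet_Ico

lemma cube_subset_Icc : cube d ⊆ Set.Icc (0 : Fin d → ℝ) 1 := by
  rw [← Set.pi_univ_Icc]
  exact Set.pi_mono fun i _ => Set.Ico_subset_Icc_self

lemma integrableOn_cube {f : (Fin d → ℝ) → ℝ} (hf : Continuous f) :
    IntegrableOn f (cube d) :=
  (hf.continuousOn.integrableOn_compact isCompact_Icc).mono_set cube_subset_Icc

lemma frac_mem_cube (y : Fin d → ℝ) : (fun i => Int.fract (y i)) ∈ cube d := by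
  intro i _
  exact ⟨Int.fract_nonneg _, Int.fract_lt_one _⟩

lemma ZPer.eq_frac {f : (Fin d → ℝ) → ℝ} (hf : ZPer f) (y : Fin d → ℝ) :
    f y = f (fun i => Int.fract (y i)) := by
  have h := hf (fun i => Int.fract (y i)) (fun i => ⌊y i⌋)
  have harg : (fun i => Int.fract (y i) + ((⌊y i⌋ : ℤ) : ℝ)) = y := by
    funext i
    exact Int.fract_add_floor (y i)
  rw [harg] at h
  exact h

lemma continuous_pder {f : (Fin d → ℝ) → ℝ} (hf : ContDiff ℝ 1 f) (i : Fin d) :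
    Continuous (pder i f) := by
  have h1 : Continuous (fderiv ℝ f) := hf.continuous_fderiv one_ne_zero
  exact (ContinuousLinearMap.apply ℝ ℝ (Pi.single i 1 : Fin d → ℝ)).continuous.comp h1

lemma ZPer.pder_zper {f : (Fin d → ℝ) → ℝ} (hper : ZPer f) (hf : Differentiable ℝ f)
    (i : Fin d) : ZPer (pder i f) := by
  intro y k
  set kR : Fin d → ℝ := fun j => (k j : ℝ) with hkR
  have hfun : (fun z : Fin d → ℝ => f (z + kR)) = f := funext fun z => hper z k
  have h1 : HasFDerivAt (fun z : Fin d → ℝ => f (z + kR)) (fderiv ℝ f (y + kR)) y := by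
    have h2 := (hf (y + kR)).hasFDerivAt.comp y ((hasFDerivAt_id y).add_const kR)
    exact h2
  rw [hfun] at h1
  have heq : fderiv ℝ f y = fderiv ℝ f (y + kR) := h1.fderiv
  show pder i f (y + kR) = pder i f y
  simp only [pder, ← heq]

lemma insertNth_add_single {n : ℕ} (i : Fin (n+1)) (yy : Fin n → ℝ) (t s : ℝ) :
    Fin.insertNth i t yy + s • (Pi.single i 1 : Fin (n+1) → ℝ) = Fin.insertNth i (t+s) yy := by
  funext j
  rcases eq_or_ne j i with rfl | hj
  · simp [Fin.insertNth_apply_same]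
  · obtain ⟨z, rfl⟩ := Fin.exists_succAbove_eq hj
    simp [Fin.insertNth_apply_succAbove, Pi.single_eq_of_ne (Fin.succAbove_ne i z)]

lemma hasDerivAt_insertNth {n : ℕ} (i : Fin (n+1)) (yy : Fin n → ℝ) (t : ℝ)
    {F : (Fin (n+1) → ℝ) → ℝ} (hF : DifferentiableAt ℝ F (Fin.insertNth i t yy)) :
    HasDerivAt (fun s => F (Fin.insertNth i s yy)) (pder i F (Fin.insertNth i t yy)) t := by
  have hA : HasDerivAt (fun s : ℝ => Fin.insertNth i 0 yy + s • (Pi.single i 1 : Fin (n+1) → ℝ))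
      (Pi.single i 1 : Fin (n+1) → ℝ) t := by
    have := ((hasDerivAt_id t).smul_const (Pi.single i 1 : Fin (n+1) → ℝ)).const_add
      (Fin.insertNth i 0 yy)
    simpa using this
  have harg : ∀ s : ℝ, Fin.insertNth i 0 yy + s • (Pi.single i 1 : Fin (n+1) → ℝ)
      = Fin.insertNth i s yy := by
    intro s
    rw [insertNth_add_single]
    norm_num
  rw [funext harg] at hA
  exact hF.hasFDerivAt.comp_hasDerivAt t hA

lemma integral_pder_cube {n : ℕ} {F : (Fin (n+1) → ℝ) → ℝ} (hF : ContDiff ℝ 1 F)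
    (hper : ZPer F) (i : Fin (n+1)) : ∫ y in cube (n+1), pder i F y = 0 := by
  set e := MeasurableEquiv.piFinSuccAbove (fun _ : Fin (n+1) => ℝ) i with he
  have mp : MeasurePreserving e.symm :=
    (volume_preserving_piFinSuccAbove (fun _ : Fin (n+1) => ℝ) i).symm
  have hesymm : ∀ z : ℝ × (Fin n → ℝ), e.symm z = Fin.insertNth i z.1 z.2 := by
    intro z
    rfl
  have hpre : e.symm ⁻¹' (cube (n+1)) = (Set.Ico (0:ℝ) 1) ×ˢ (cube n) := by
    ext z
    simp only [Set.mem_preimage, cube, Set.mem_pi, Set.mem_univ, forall_true_left,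
      Set.mem_prod, hesymm]
    rw [i.forall_iff_succAbove]
    simp [Fin.insertNth_apply_same, Fin.insertNth_apply_succAbove]
  have hcont : Continuous fun z : ℝ × (Fin n → ℝ) => pder i F (e.symm z) := by
    apply (continuous_pder hF i).comp
    exact (Continuous.finInsertNth (A := fun _ : Fin (n+1) => ℝ) i continuous_fst
      continuous_snd).congr fun z => (hesymm z).symm
  have hint : IntegrableOn (fun z : ℝ × (Fin n → ℝ) => pder i F (e.symm z))
      ((Set.Ico (0:ℝ) 1) ×ˢ (cube n)) := by
    apply (hcont.continuousOn.integrableOn_compact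
      (isCompact_Icc.prod isCompact_Icc)).mono_set
    exact Set.prod_mono Set.Ico_subset_Icc_self cube_subset_Icc
  have step1 : ∫ y in cube (n+1), pder i F y
      = ∫ z in (Set.Ico (0:ℝ) 1) ×ˢ (cube n), pder i F (e.symm z) := by
    rw [← hpre]
    exact (mp.setIntegral_preimage_emb e.symm.measurableEmbedding _ _).symm
  have step2 : ∫ z in (Set.Ico (0:ℝ) 1) ×ˢ (cube n), pder i F (e.symm z)
      = ∫ yy in cube n, ∫ t in Set.Ico (0:ℝ) 1, pder i F (e.symm (t, yy)) := by
    have hI2 : Integrable (fun z : ℝ × (Fin n → ℝ) => pder i F (e.symm z))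
        ((volume.restrict (Set.Ico (0:ℝ) 1)).prod (volume.restrict (cube n))) := by
      rw [Measure.prod_restrict, ← Measure.volume_eq_prod]
      exact hint
    calc ∫ z in (Set.Ico (0:ℝ) 1) ×ˢ (cube n), pder i F (e.symm z)
        = ∫ z, pder i F (e.symm z)
            ∂((volume.restrict (Set.Ico (0:ℝ) 1)).prod (volume.restrict (cube n))) := by
          rw [Measure.prod_restrict, ← Measure.volume_eq_prod]
      _ = ∫ yy in cube n, ∫ t in Set.Ico (0:ℝ) 1, pder i F (e.symm (t, yy)) :=
          integral_prod_symm _ hI2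
  have inner0 : ∀ yy : Fin n → ℝ, (∫ t in Set.Ico (0:ℝ) 1, pder i F (e.symm (t, yy))) = 0 := by
    intro yy
    have hsect : ∀ t : ℝ, e.symm (t, yy) = Fin.insertNth i t yy := fun t => hesymm (t, yy)
    have hq : ∀ t : ℝ, HasDerivAt (fun s => F (Fin.insertNth i s yy))
        (pder i F (Fin.insertNth i t yy)) t := fun t =>
      hasDerivAt_insertNth i yy t (hF.differentiable one_ne_zero _)
    have hicont : Continuous fun t => pder i F (Fin.insertNth i t yy) :=
      (continuous_pder hF i).comp (Continuous.finInsertNth (A := fun _ : Fin (n+1) => ℝ) i continuous_id (continuous_const (y := yy)))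
    have h1 : (∫ t in Set.Ico (0:ℝ) 1, pder i F (e.symm (t, yy)))
        = ∫ t in (0:ℝ)..1, pder i F (Fin.insertNth i t yy) := by
      simp_rw [hsect]
      rw [intervalIntegral.integral_of_le zero_le_one]
      exact setIntegral_congr_set Ico_ae_eq_Ioc
    rw [h1]
    rw [intervalIntegral.integral_eq_sub_of_hasDerivAt (fun t _ => hq t)
      (hicont.intervalIntegrable _ _)]
    have hshift : F (Fin.insertNth i 1 yy) = F (Fin.insertNth i 0 yy) := by
      have hk := hper (Fin.insertNth i 0 yy) (Pi.single i 1)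
      have harg : (fun j => (Fin.insertNth (α := fun _ => ℝ) i 0 yy) j
            + ((Pi.single i (1:ℤ) : Fin (n+1) → ℤ) j : ℝ))
          = Fin.insertNth i 1 yy := by
        funext j
        rcases eq_or_ne j i with rfl | hj
        · simp [Fin.insertNth_apply_same]
        · obtain ⟨z, rfl⟩ := Fin.exists_succAbove_eq hj
          simp [Fin.insertNth_apply_succAbove, Pi.single_eq_of_ne (Fin.succAbove_ne i z)]
      rw [harg] at hk
      exact hk
    rw [hshift, sub_self]
  rw [step1, step2]
  calc (∫ yy in cube n, ∫ t in Set.Ico (0:ℝ) 1, pder i F (e.symm (t, yy)))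
      = ∫ yy in cube n, (0:ℝ) := by
        apply setIntegral_congr_fun measurableSet_cube
        intro yy _
        exact inner0 yy
    _ = 0 := by simp

end CubeLemmas

section Uniqueness

lemma contDiff_pder {d : ℕ} {f : (Fin d → ℝ) → ℝ} (hf : ContDiff ℝ 2 f) (i : Fin d) :
    ContDiff ℝ 1 (pder i f) := by
  have h1 : ContDiff ℝ 1 (fderiv ℝ f) := hf.fderiv_right (by norm_num)
  exact (ContinuousLinearMap.apply ℝ ℝ (Pi.single i 1 : Fin d → ℝ)).contDiff.comp h1

lemma pder_sub {d : ℕ} {f g : (Fin d → ℝ) → ℝ} {y : Fin d → ℝ} (i : Fin d)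
    (hf : DifferentiableAt ℝ f y) (hg : DifferentiableAt ℝ g y) :
    pder i (fun z => f z - g z) y = pder i f y - pder i g y := by
  simp [pder, fderiv_fun_sub hf hg]

lemma pder_mul {d : ℕ} {f g : (Fin d → ℝ) → ℝ} {y : Fin d → ℝ} (i : Fin d)
    (hf : DifferentiableAt ℝ f y) (hg : DifferentiableAt ℝ g y) :
    pder i (fun z => f z * g z) y = f y * pder i g y + g y * pder i f y := by
  simp [pder, fderiv_fun_mul hf hg]

lemma ZPer.mul {d : ℕ} {f g : (Fin d → ℝ) → ℝ} (hf : ZPer f) (hg : ZPer g) :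
    ZPer (fun y => f y * g y) := fun y k => by simp only [hf y k, hg y k]

lemma ZPer.sub' {d : ℕ} {f g : (Fin d → ℝ) → ℝ} (hf : ZPer f) (hg : ZPer g) :
    ZPer (fun y => f y - g y) := fun y k => by simp only [hf y k, hg y k]

lemma ZPer.const_add {d : ℕ} {g : (Fin d → ℝ) → ℝ} (c : ℝ) (hg : ZPer g) :
    ZPer (fun y => c + g y) := fun y k => by simp only [hg y k]

lemma test_integral {n : ℕ} {b : Fin (n+1) → (Fin (n+1) → ℝ) → ℝ} {φ : (Fin (n+1) → ℝ) → ℝ}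
    (hb : ∀ i, ContDiff ℝ 1 (b i)) (hbp : ∀ i, ZPer (b i))
    (hφ : ContDiff ℝ 2 φ) (hφp : ZPer φ)
    (hdiv : ∀ y, ∑ i, pder i (b i) y = 0) :
    ∫ y in cube (n+1), (∑ i, pder i φ y * b i y) = 0 := by
  have hφ1 : ContDiff ℝ 1 φ := hφ.of_le (by norm_num)
  have hprod : ∀ i, ContDiff ℝ 1 (fun y => φ y * b i y) := fun i => hφ1.mul (hb i)
  have hprodper : ∀ i, ZPer (fun y => φ y * b i y) := fun i => hφp.mul (hbp i)
  have hzero : ∀ i, ∫ y in cube (n+1), pder i (fun z => φ z * b i z) y = 0 := fun i =>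
    integral_pder_cube (hprod i) (hprodper i) i
  have hsum0 : ∫ y in cube (n+1), (∑ i, pder i (fun z => φ z * b i z) y) = 0 := by
    rw [integral_finset_sum _ fun i _ =>
      (integrableOn_cube (continuous_pder (hprod i) i))]
    simp [hzero]
  have hpt : ∀ y, (∑ i, pder i (fun z => φ z * b i z) y)
      = (∑ i, pder i φ y * b i y) + φ y * (∑ i, pder i (b i) y) := by
    intro y
    rw [Finset.mul_sum, ← Finset.sum_add_distrib]
    apply Finset.sum_congr rfl
    intro i _
    rw [pder_mul i (hφ1.differentiable one_ne_zero y) ((hb i).differentiable one_ne_zero y)]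
    ring
  have hcongr : ∫ y in cube (n+1), (∑ i, pder i φ y * b i y)
      = ∫ y in cube (n+1), (∑ i, pder i (fun z => φ z * b i z) y) :=
    setIntegral_congr_fun measurableSet_cube fun y _ => by
      rw [hpt y, hdiv y, mul_zero, add_zero]
  rw [hcongr, hsum0]

lemma cube_subset_closure_interior {d : ℕ} : cube d ⊆ closure (interior (cube d)) := by
  have h1 : interior (cube d) = Set.univ.pi fun _ : Fin d => Set.Ioo (0:ℝ) 1 := by
    rw [cube, interior_pi_set Set.finite_univ]
    simp [interior_Ico]
  have h2 : closure (Set.univ.pi fun _ : Fin d => Set.Ioo (0:ℝ) 1)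
      = Set.univ.pi fun _ : Fin d => Set.Icc (0:ℝ) 1 := by
    rw [closure_pi_set]
    simp [closure_Ioo (zero_ne_one)]
  rw [h1, h2]
  exact fun y hy i _ => Set.Ico_subset_Icc_self (hy i trivial)

lemma cell_unique {n : ℕ} {V : (Fin (n+1) → ℝ) → (Fin (n+1) → ℝ) → ℝ}
    {x Λ : Fin (n+1) → ℝ} {w1 m1 w2 m2 : (Fin (n+1) → ℝ) → ℝ} {H1 H2 : ℝ}
    (h1 : CellSolAt V x Λ w1 m1 H1) (h2 : CellSolAt V x Λ w2 m2 H2) :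
    ∀ y, m1 y = m2 y := by
  obtain ⟨hw1d, hw1p, hm1d, hm1p, hm1pos, hHJ1, hdiv1, hint1⟩ := h1
  obtain ⟨hw2d, hw2p, hm2d, hm2p, hm2pos, hHJ2, hdiv2, hint2⟩ := h2
  have hw1diff : Differentiable ℝ w1 := hw1d.differentiable (by norm_num)
  have hw2diff : Differentiable ℝ w2 := hw2d.differentiable (by norm_num)
  set φ : (Fin (n+1) → ℝ) → ℝ := fun y => w1 y - w2 y with hφ
  have hφd : ContDiff ℝ 2 φ := hw1d.sub hw2d
  have hφp : ZPer φ := hw1p.sub' hw2p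
  set b1 : Fin (n+1) → (Fin (n+1) → ℝ) → ℝ :=
    fun i z => m1 z * (Λ i + pder i w1 z) with hb1
  set b2 : Fin (n+1) → (Fin (n+1) → ℝ) → ℝ :=
    fun i z => m2 z * (Λ i + pder i w2 z) with hb2
  have hb1d : ∀ i, ContDiff ℝ 1 (b1 i) := fun i =>
    hm1d.mul (contDiff_const.add (contDiff_pder hw1d i))
  have hb2d : ∀ i, ContDiff ℝ 1 (b2 i) := fun i =>
    hm2d.mul (contDiff_const.add (contDiff_pder hw2d i))
  have hb1p : ∀ i, ZPer (b1 i) := fun i =>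
    hm1p.mul ((hw1p.pder_zper hw1diff i).const_add (Λ i))
  have hb2p : ∀ i, ZPer (b2 i) := fun i =>
    hm2p.mul ((hw2p.pder_zper hw2diff i).const_add (Λ i))
  have I1 : ∫ y in cube (n+1), (∑ i, pder i φ y * b1 i y) = 0 :=
    test_integral hb1d hb1p hφd hφp hdiv1
  have I2 : ∫ y in cube (n+1), (∑ i, pder i φ y * b2 i y) = 0 :=
    test_integral hb2d hb2p hφd hφp hdiv2
  -- pointwise algebra
  have hpderφ : ∀ i y, pder i φ y = pder i w1 y - pder i w2 y := fun i y =>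
    pder_sub i (hw1diff y) (hw2diff y)
  set L : (Fin (n+1) → ℝ) → ℝ := fun y => Real.log (m1 y) - Real.log (m2 y) with hL
  set Q : (Fin (n+1) → ℝ) → ℝ := fun y => ∑ i, (pder i φ y)^2 with hQ
  have halg : ∀ y, (m1 y - m2 y) * L y + (m1 y + m2 y) * Q y / 2
      = (∑ i, pder i φ y * b1 i y) - (∑ i, pder i φ y * b2 i y)
        - (m1 y - m2 y) * (H1 - H2) := by
    intro y
    have hA1 : ∑ i, pder i φ y * b1 i y = m1 y * ∑ i, (Λ i + pder i w1 y) * pder i φ y := by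
      rw [Finset.mul_sum]; apply Finset.sum_congr rfl; intro i _; simp only [hb1]; ring
    have hA2 : ∑ i, pder i φ y * b2 i y = m2 y * ∑ i, (Λ i + pder i w2 y) * pder i φ y := by
      rw [Finset.mul_sum]; apply Finset.sum_congr rfl; intro i _; simp only [hb2]; ring
    set A1 := ∑ i, (Λ i + pder i w1 y) * pder i φ y with hA1d
    set A2 := ∑ i, (Λ i + pder i w2 y) * pder i φ y with hA2d
    have hS1 : (∑ i, (Λ i + pder i w1 y)^2) - (∑ i, (Λ i + pder i w2 y)^2)
        = 2 * A1 - Q y := by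
      rw [hA1d, hQ, ← Finset.sum_sub_distrib, Finset.mul_sum, ← Finset.sum_sub_distrib]
      apply Finset.sum_congr rfl
      intro i _
      rw [hpderφ i y]; ring
    have hS2 : (∑ i, (Λ i + pder i w1 y)^2) - (∑ i, (Λ i + pder i w2 y)^2)
        = 2 * A2 + Q y := by
      rw [hA2d, hQ, ← Finset.sum_sub_distrib, Finset.mul_sum, ← Finset.sum_add_distrib]
      apply Finset.sum_congr rfl
      intro i _
      rw [hpderφ i y]; ring
    have hHJd : (∑ i, (Λ i + pder i w1 y)^2)/2 - (∑ i, (Λ i + pder i w2 y)^2)/2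
        = L y + (H1 - H2) := by
      have e1 := hHJ1 y
      have e2 := hHJ2 y
      simp only [hL]
      linarith
    rw [hA1, hA2]
    have hQA : Q y = A1 - A2 := by linarith
    have hLval : L y = A1 - Q y / 2 - (H1 - H2) := by linarith
    rw [hLval, hQA]
    ring
  -- integrate the identity
  have hm1c : Continuous m1 := hm1d.continuous
  have hm2c : Continuous m2 := hm2d.continuous
  have hLc : Continuous L := by
    apply Continuous.sub
    · exact hm1c.log fun y => (hm1pos y).ne'
    · exact hm2c.log fun y => (hm2pos y).ne'
  have hQc : Continuous Q := by
    apply continuous_finset_sum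
    intro i _
    exact (continuous_pder (hφd.of_le (by norm_num)) i).pow 2
  have hRc : Continuous fun y => (m1 y - m2 y) * L y := ((hm1c.sub hm2c).mul hLc)
  have hPc : Continuous fun y => (m1 y + m2 y) * Q y / 2 :=
    ((hm1c.add hm2c).mul hQc).div_const 2
  have hintR : IntegrableOn (fun y => (m1 y - m2 y) * L y) (cube (n+1)) :=
    integrableOn_cube hRc
  have hintP : IntegrableOn (fun y => (m1 y + m2 y) * Q y / 2) (cube (n+1)) :=
    integrableOn_cube hPc
  have hintb1 : IntegrableOn (fun y => ∑ i, pder i φ y * b1 i y) (cube (n+1)) := by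
    apply integrableOn_cube
    apply continuous_finset_sum
    intro i _
    exact (continuous_pder (hφd.of_le (by norm_num)) i).mul (hb1d i).continuous
  have hintb2 : IntegrableOn (fun y => ∑ i, pder i φ y * b2 i y) (cube (n+1)) := by
    apply integrableOn_cube
    apply continuous_finset_sum
    intro i _
    exact (continuous_pder (hφd.of_le (by norm_num)) i).mul (hb2d i).continuous
  have hintm : IntegrableOn (fun y => (m1 y - m2 y) * (H1 - H2)) (cube (n+1)) :=
    integrableOn_cube ((hm1c.sub hm2c).mul continuous_const)
  have hmdiff0 : ∫ y in cube (n+1), (m1 y - m2 y) = 0 := by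
    rw [integral_sub (integrableOn_cube hm1c) (integrableOn_cube hm2c), hint1, hint2, sub_self]
  have hsum : (∫ y in cube (n+1), (m1 y - m2 y) * L y)
      + (∫ y in cube (n+1), (m1 y + m2 y) * Q y / 2) = 0 := by
    rw [← integral_add hintR hintP]
    have : ∫ y in cube (n+1), ((m1 y - m2 y) * L y + (m1 y + m2 y) * Q y / 2)
        = ∫ y in cube (n+1), ((∑ i, pder i φ y * b1 i y) - (∑ i, pder i φ y * b2 i y)
          - (m1 y - m2 y) * (H1 - H2)) :=
      setIntegral_congr_fun measurableSet_cube fun y _ => halg y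
    rw [this]
    rw [integral_sub (f := fun y => (∑ i, pder i φ y * b1 i y) - (∑ i, pder i φ y * b2 i y))
        (g := fun y => (m1 y - m2 y) * (H1 - H2)) (hintb1.sub hintb2) hintm]
    rw [integral_sub (f := fun y => (∑ i, pder i φ y * b1 i y))
        (g := fun y => (∑ i, pder i φ y * b2 i y)) hintb1 hintb2, I1, I2]
    have : ∫ y in cube (n+1), (m1 y - m2 y) * (H1 - H2)
        = (∫ y in cube (n+1), (m1 y - m2 y)) * (H1 - H2) := by
      rw [← integral_mul_const]
    rw [this, hmdiff0]
    ring
  -- both terms are nonneg, hence each vanishes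
  have hRnn : ∀ y, 0 ≤ (m1 y - m2 y) * L y := by
    intro y
    rcases le_total (m2 y) (m1 y) with h | h
    · apply mul_nonneg (by linarith)
      simp only [hL, sub_nonneg]
      exact Real.log_le_log (hm2pos y) h
    · apply mul_nonneg_of_nonpos_of_nonpos (by linarith)
      simp only [hL, sub_nonpos]
      exact Real.log_le_log (hm1pos y) h
  have hPnn : ∀ y, 0 ≤ (m1 y + m2 y) * Q y / 2 := by
    intro y
    apply div_nonneg _ (by norm_num)
    apply mul_nonneg (by have := hm1pos y; have := hm2pos y; linarith)
    exact Finset.sum_nonneg fun i _ => sq_nonneg _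
  have hPint_nn : 0 ≤ ∫ y in cube (n+1), (m1 y + m2 y) * Q y / 2 :=
    setIntegral_nonneg measurableSet_cube fun y _ => hPnn y
  have hRint_nn : 0 ≤ ∫ y in cube (n+1), (m1 y - m2 y) * L y :=
    setIntegral_nonneg measurableSet_cube fun y _ => hRnn y
  have hR0 : ∫ y in cube (n+1), (m1 y - m2 y) * L y = 0 := le_antisymm (by linarith) hRint_nn
  -- pointwise vanishing on the cube
  have hae : (fun y => (m1 y - m2 y) * L y) =ᵐ[volume.restrict (cube (n+1))] 0 :=
    (integral_eq_zero_iff_of_nonneg (fun y => hRnn y) hintR).mp hR0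
  have heqon : Set.EqOn (fun y => (m1 y - m2 y) * L y) 0 (cube (n+1)) :=
    Measure.eqOn_of_ae_eq hae hRc.continuousOn continuousOn_const cube_subset_closure_interior
  have hcube_eq : ∀ y ∈ cube (n+1), m1 y = m2 y := by
    intro y hy
    have h0 : (m1 y - m2 y) * L y = 0 := heqon hy
    by_contra hne
    rcases lt_or_gt_of_ne hne with h | h
    · have hl : L y < 0 := by
        simp only [hL, sub_neg]
        exact Real.log_lt_log (hm1pos y) h
      have : 0 < (m1 y - m2 y) * L y := mul_pos_of_neg_of_neg (by linarith) hl
      linarith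
    · have hl : 0 < L y := by
        simp only [hL, sub_pos]
        exact Real.log_lt_log (hm2pos y) h
      have : 0 < (m1 y - m2 y) * L y := mul_pos (by linarith) hl
      linarith
  intro y
  calc m1 y = m1 (fun i => Int.fract (y i)) := hm1p.eq_frac y
    _ = m2 (fun i => Int.fract (y i)) := hcube_eq _ (frac_mem_cube y)
    _ = m2 y := (hm2p.eq_frac y).symm

end Uniqueness

section Assembly

lemma periodic_add_int {f : ℝ → ℝ} (hf : Function.Periodic f 1) (t : ℝ) (k : ℤ) :
    f (t + k) = f t := by
  have h := hf.sub_zsmul_eq (-k) (x := t)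
  simpa using h

lemma hasFDerivAt_coord {d : ℕ} {g : ℝ → ℝ} {y : Fin d → ℝ} (j : Fin d) {g' : ℝ}
    (hg : HasDerivAt g g' (y j)) :
    HasFDerivAt (fun z : Fin d → ℝ => g (z j))
      (g' • (ContinuousLinearMap.proj j : (Fin d → ℝ) →L[ℝ] ℝ)) y := by
  have hproj : HasFDerivAt (fun z : Fin d → ℝ => z j)
      (ContinuousLinearMap.proj j : (Fin d → ℝ) →L[ℝ] ℝ) y :=
    (ContinuousLinearMap.proj j : (Fin d → ℝ) →L[ℝ] ℝ).hasFDerivAt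
  exact hg.comp_hasFDerivAt y hproj

lemma pder_sum_coord {d : ℕ} {g : Fin d → ℝ → ℝ} (hg : ∀ j, Differentiable ℝ (g j))
    (i : Fin d) (y : Fin d → ℝ) :
    pder i (fun z => ∑ j, g j (z j)) y = deriv (g i) (y i) := by
  have hF : HasFDerivAt (fun z : Fin d → ℝ => ∑ j, g j (z j))
      (∑ j, (deriv (g j) (y j)) • (ContinuousLinearMap.proj j : (Fin d → ℝ) →L[ℝ] ℝ)) y :=
    HasFDerivAt.fun_sum fun j _ => hasFDerivAt_coord j ((hg j) (y j)).hasDerivAt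
  rw [pder, hF.fderiv]
  rw [ContinuousLinearMap.sum_apply]
  rw [Finset.sum_eq_single i]
  · simp
  · intro j _ hj
    simp [ContinuousLinearMap.proj_apply, Pi.single_eq_of_ne hj]
  · intro h; exact absurd (Finset.mem_univ i) h

lemma pder_prod_erase_zero {d : ℕ} {g : Fin d → ℝ → ℝ} (hg : ∀ j, Differentiable ℝ (g j))
    (i : Fin d) (y : Fin d → ℝ) (c : ℝ) :
    pder i (fun z => c * ∏ j ∈ Finset.univ.erase i, g j (z j)) y = 0 := by
  classical
  have hP : HasFDerivAt (fun z : Fin d → ℝ => ∏ j ∈ Finset.univ.erase i, g j (z j))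
      (∑ j ∈ Finset.univ.erase i, (∏ k ∈ (Finset.univ.erase i).erase j, g k (y k)) •
        ((deriv (g j) (y j)) • (ContinuousLinearMap.proj j : (Fin d → ℝ) →L[ℝ] ℝ))) y :=
    HasFDerivAt.finset_prod fun j _ => hasFDerivAt_coord j ((hg j) (y j)).hasDerivAt
  have hPd : DifferentiableAt ℝ (fun z : Fin d → ℝ => ∏ j ∈ Finset.univ.erase i, g j (z j)) y :=
    hP.differentiableAt
  rw [pder, fderiv_const_mul hPd, hP.fderiv]
  rw [ContinuousLinearMap.smul_apply, ContinuousLinearMap.sum_apply]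
  have : ∀ j ∈ Finset.univ.erase i,
      ((∏ k ∈ (Finset.univ.erase i).erase j, g k (y k)) •
        ((deriv (g j) (y j)) • (ContinuousLinearMap.proj j : (Fin d → ℝ) →L[ℝ] ℝ)))
        (Pi.single i 1) = 0 := by
    intro j hj
    have hji : j ≠ i := Finset.ne_of_mem_erase hj
    simp [ContinuousLinearMap.proj_apply, Pi.single_eq_of_ne hji]
  rw [Finset.sum_congr rfl this]
  simp

lemma contDiff_prod_coord {d : ℕ} {N : WithTop ℕ∞} {g : Fin d → ℝ → ℝ}
    (hg : ∀ j, ContDiff ℝ N (g j)) :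
    ContDiff ℝ N (fun z : Fin d → ℝ => ∏ j, g j (z j)) := by
  classical
  have : ∀ s : Finset (Fin d), ContDiff ℝ N (fun z : Fin d → ℝ => ∏ j ∈ s, g j (z j)) := by
    intro s
    induction s using Finset.induction with
    | empty => simp only [Finset.prod_empty]; exact contDiff_const
    | insert _ _ hnotmem ih =>
        simp only [Finset.prod_insert hnotmem]
        exact ((hg _).comp (ContinuousLinearMap.proj _ :
          (Fin d → ℝ) →L[ℝ] ℝ).contDiff).mul ih
  exact this Finset.univ

lemma exists_bound {d : ℕ} (W : (Fin d → ℝ) → ℝ → ℝ) (hc : Continuous (uncurry W))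
    (hZ : ∀ t, ZPer fun x => W x t) (hp : ∀ x, Function.Periodic (W x) 1) :
    ∃ B : ℝ, 0 ≤ B ∧ ∀ x t, |W x t| ≤ B := by
  obtain ⟨C, hC⟩ := ((isCompact_Icc (a := (0 : Fin d → ℝ)) (b := 1)).prod
    (isCompact_Icc (a := (0:ℝ)) (b := 1))).exists_bound_of_continuousOn hc.continuousOn
  refine ⟨max C 0, le_max_right _ _, ?_⟩
  intro x t
  have h1 : W x t = W (fun i => Int.fract (x i)) (Int.fract t) := by
    have ha : W x t = W (fun i => Int.fract (x i)) t := (hZ t).eq_frac x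
    have hb : W (fun i => Int.fract (x i)) (Int.fract t)
        = W (fun i => Int.fract (x i)) t := by
      have h2 := (hp (fun i => Int.fract (x i))).sub_zsmul_eq ⌊t⌋ (x := t)
      rw [zsmul_eq_mul, mul_one] at h2
      rw [← Int.self_sub_floor]
      exact h2
    rw [ha, ← hb]
  rw [h1]
  have hmem : ((fun i => Int.fract (x i)), Int.fract t)
      ∈ (Set.Icc (0 : Fin d → ℝ) 1) ×ˢ (Set.Icc (0:ℝ) 1) := by
    constructor
    · exact cube_subset_Icc (frac_mem_cube x)
    · exact ⟨Int.fract_nonneg t, (Int.fract_lt_one t).le⟩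
  have := hC _ hmem
  rw [Real.norm_eq_abs] at this
  exact le_trans this (le_max_left _ _)

end Assembly

/-- a uniform positive lower bound for `m̃`, valid for all `x ∈ 𝕋^d`,
`y ∈ 𝒴^d` and `Λ ∈ ℝ^d`; for `d > 1`, `V` is assumed separable in `y`. -/
theorem stmt16 {d : ℕ} (V : (Fin d → ℝ) → (Fin d → ℝ) → ℝ) (hV : SmoothV V)
    (hsep : 1 < d → SeparableVPer V)
    (w m : (Fin d → ℝ) → (Fin d → ℝ) → (Fin d → ℝ) → ℝ)
    (H : (Fin d → ℝ) → (Fin d → ℝ) → ℝ)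
    (hsol : ∀ x Λ, CellSolAt V x Λ (w x Λ) (m x Λ) (H x Λ)) :
    ∃ C > 0, ∀ (x y Λ : Fin d → ℝ), C ≤ m x Λ y := by
  rcases Nat.eq_zero_or_pos d with hd0 | hdpos
  · subst hd0
    refine ⟨1, one_pos, ?_⟩
    intro x y Λ
    obtain ⟨_, _, _, _, hpos, _, _, hint⟩ := hsol x Λ
    have hcube : cube 0 = Set.univ := by
      ext z; simp [cube]
    rw [hcube, Measure.restrict_univ] at hint
    rw [show (fun z : Fin 0 → ℝ => m x Λ z) = fun _ => m x Λ y from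
      funext fun z => by rw [Subsingleton.elim z y]] at hint
    rw [integral_const] at hint
    have hvol : (volume : Measure (Fin 0 → ℝ)) Set.univ = 1 := by
      rw [volume_pi, Measure.pi_univ]; simp
    rw [measureReal_def, hvol] at hint
    simp at hint
    linarith
  · obtain ⟨n, rfl⟩ : ∃ n, d = n + 1 := ⟨d - 1, (Nat.succ_pred_eq_of_pos hdpos).symm⟩
    have hsep' : SeparableVPer V := by
      rcases Nat.lt_or_ge 1 (n+1) with h | h
      · exact hsep h
      · have hn : n = 0 := by omega
        subst hn
        refine ⟨fun _ => fun x t => V x (fun _ => t), ?_, ?_, ?_, ?_⟩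
        · intro i
          have heq : uncurry (fun x t => V x (fun _ : Fin 1 => t))
              = (uncurry V) ∘ (fun p : (Fin 1 → ℝ) × ℝ => (p.1, fun _ : Fin 1 => p.2)) := rfl
          rw [heq]
          exact hV.1.comp (contDiff_fst.prodMk (contDiff_pi.mpr fun _ => contDiff_snd))
        · intro i t xx k
          exact hV.2.1 (fun _ => t) xx k
        · intro i x t
          have hz := hV.2.2 x (fun _ => t) (fun _ => (1:ℤ))
          simpa using hz
        · intro x y
          rw [Fin.sum_univ_one]
          congr 1
          funext j
          exact congrArg y (Fin.eq_zero j)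
    obtain ⟨Vi, hVi1, hVi2, hVi3, hVisum⟩ := hsep'
    have hBex : ∀ i, ∃ B : ℝ, 0 ≤ B ∧ ∀ x t, |Vi i x t| ≤ B := fun i =>
      exists_bound (Vi i) (hVi1 i).continuous (hVi2 i) (hVi3 i)
    choose B hB0 hBle using hBex
    refine ⟨∏ i, Real.exp (-(2 * B i)),
      Finset.prod_pos (fun i _ => Real.exp_pos _), ?_⟩
    intro x y Λ
    have hsolve : ∀ i : Fin (n+1), ∃ (wi mi : ℝ → ℝ) (h cc : ℝ),
        ContDiff ℝ 2 wi ∧ Function.Periodic wi 1 ∧ ContDiff ℝ 1 mi ∧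
        Function.Periodic mi 1 ∧
        (∀ t, 0 < mi t) ∧ (∀ t, Real.exp (-(2*(B i))) ≤ mi t) ∧
        (∀ t, mi t * (Λ i + deriv wi t) = cc) ∧
        (∀ t, (Λ i + deriv wi t)^2/2 + Vi i x t = Real.log (mi t) + h) ∧
        (∫ t in (0:ℝ)..1, mi t) = 1 := by
      intro i
      have hvd : ContDiff ℝ 1 (fun t => Vi i x t) :=
        ((hVi1 i).comp (contDiff_const.prodMk contDiff_id)).of_le (by simp)
      exact oneDSolve (Vi i x) hvd (hVi3 i x) (B i) (fun t => hBle i x t) (Λ i)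
    choose wi mi hi cci hwd hwp hmd hmp hmpos hmlow hflux hHJi hmint using hsolve
    set What : (Fin (n+1) → ℝ) → ℝ := fun z => ∑ j, wi j (z j) with hWhat
    set Mhat : (Fin (n+1) → ℝ) → ℝ := fun z => ∏ j, mi j (z j) with hMhat
    have hwdiff : ∀ j, Differentiable ℝ (wi j) := fun j => (hwd j).differentiable (by norm_num)
    have hpderWhat : ∀ (i : Fin (n+1)) (z : Fin (n+1) → ℝ),
        pder i What z = deriv (wi i) (z i) := fun i z => pder_sum_coord hwdiff i z
    have hMhatpos : ∀ z, 0 < Mhat z := fun z =>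
      Finset.prod_pos fun j _ => hmpos j (z j)
    have hcell : CellSolAt V x Λ What Mhat (∑ j, hi j) := by
      refine ⟨?_, ?_, ?_, ?_, hMhatpos, ?_, ?_, ?_⟩
      · exact ContDiff.sum fun j _ => (hwd j).comp
          (ContinuousLinearMap.proj j : (Fin (n+1) → ℝ) →L[ℝ] ℝ).contDiff
      · intro z k
        exact Finset.sum_congr rfl fun j _ => periodic_add_int (hwp j) (z j) (k j)
      · exact contDiff_prod_coord hmd
      · intro z k
        exact Finset.prod_congr rfl fun j _ => periodic_add_int (hmp j) (z j) (k j)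
      · -- HJ
        intro z
        have step1 : (∑ i, (Λ i + pder i What z)^2)/2 + V x z
            = ∑ j, ((Λ j + deriv (wi j) (z j))^2/2 + Vi j x (z j)) := by
          rw [hVisum x z, Finset.sum_div, ← Finset.sum_add_distrib]
          exact Finset.sum_congr rfl fun j _ => by rw [hpderWhat j z]
        rw [step1]
        have step2 : ∑ j, ((Λ j + deriv (wi j) (z j))^2/2 + Vi j x (z j))
            = ∑ j, (Real.log (mi j (z j)) + hi j) :=
          Finset.sum_congr rfl fun j _ => hHJi j (z j)
        rw [step2, Finset.sum_add_distrib]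
        congr 1
        rw [hMhat]
        rw [Real.log_prod fun j _ => (hmpos j (z j)).ne']
      · -- divergence
        intro z
        apply Finset.sum_eq_zero
        intro j _
        have hfun : (fun zz => Mhat zz * (Λ j + pder j What zz))
            = fun zz => cci j * ∏ k ∈ Finset.univ.erase j, mi k (zz k) := by
          funext zz
          simp only [hpderWhat j zz, hMhat]
          rw [← Finset.mul_prod_erase Finset.univ _ (Finset.mem_univ j)]
          rw [show mi j (zz j) * (∏ k ∈ Finset.univ.erase j, mi k (zz k))
              * (Λ j + deriv (wi j) (zz j))
              = (mi j (zz j) * (Λ j + deriv (wi j) (zz j)))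
                * ∏ k ∈ Finset.univ.erase j, mi k (zz k) from by ring]
          rw [hflux j (zz j)]
        rw [hfun]
        exact pder_prod_erase_zero (fun k => (hmd k).differentiable one_ne_zero) j z (cci j)
      · -- integral
        have hprod : ∫ z in cube (n+1), Mhat z
            = ∏ j, ∫ t in Set.Ico (0:ℝ) 1, mi j t := by
          rw [hMhat]
          rw [← integral_indicator measurableSet_cube]
          have hpt : (cube (n+1)).indicator (fun z : Fin (n+1) → ℝ => ∏ j, mi j (z j))
              = fun z => ∏ j, (Set.Ico (0:ℝ) 1).indicator (mi j) (z j) := by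
            funext z
            by_cases hz : z ∈ cube (n+1)
            · rw [Set.indicator_of_mem hz]
              exact Finset.prod_congr rfl fun j _ =>
                (Set.indicator_of_mem (hz j (Set.mem_univ j)) _).symm
            · rw [Set.indicator_of_notMem hz]
              have : ∃ j, z j ∉ Set.Ico (0:ℝ) 1 := by
                by_contra hcon
                push_neg at hcon
                exact hz fun j _ => hcon j
              obtain ⟨j, hj⟩ := this
              exact (Finset.prod_eq_zero (Finset.mem_univ j)
                (Set.indicator_of_notMem hj _)).symm
          rw [hpt]
          rw [MeasureTheory.integral_fintype_prod_volume_eq_prod (𝕜 := ℝ)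
            (fun j => (Set.Ico (0:ℝ) 1).indicator (mi j))]
          exact Finset.prod_congr rfl fun j _ => integral_indicator measurableSet_Ico
        rw [hprod]
        have hone : ∀ j, ∫ t in Set.Ico (0:ℝ) 1, mi j t = 1 := by
          intro j
          rw [setIntegral_congr_set Ico_ae_eq_Ioc,
            ← intervalIntegral.integral_of_le zero_le_one]
          exact hmint j
        have hfin : (∏ j, ∫ t in Set.Ico (0:ℝ) 1, mi j t) = ∏ j : Fin (n+1), (1:ℝ) :=
          Finset.prod_congr rfl fun j _ => hone j
        rw [hfin]
        simp
    have huniq := cell_unique (hsol x Λ) hcell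
    rw [huniq y]
    calc ∏ i, Real.exp (-(2 * B i)) ≤ ∏ i, mi i (y i) :=
          Finset.prod_le_prod (fun i _ => (Real.exp_pos _).le)
            (fun i _ => hmlow i (y i))
      _ = Mhat y := rfl
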